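/- arXiv:2505.07535 — 3 statements merged into one kernel-verified Lean document; each statement's English description precedes it below -/
import Mathlib

section
/- If a quandle X is finitely generated, then its inner automorphism group Inn(X) is a finitely generated group. -/
structure QuandleStruct (X : Type*) where
  op : X → X → X
  s : X → Equiv.Perm X
  s_apply : ∀ x y : X, s y x = op x y
  idem : ∀ x : X, op x x = x
  distrib : ∀ x y z : X, op (op x y) z = op (op x z) (op y z)

def QuandleStruct.Inn {X : Type*} (Q : QuandleStruct X) : Subgroup (Equiv.Perm X) :=
  Subgroup.closure (Set.range Q.s)

/-- `A` generates the quandle. -/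
def QGenerates {X : Type*} (Q : QuandleStruct X) (A : Set X) : Prop :=
  ∀ x : X, ∃ a ∈ A, ∃ l : List (Equiv.Perm X),
    (∀ g ∈ l, ∃ b ∈ A, g = Q.s b ∨ g = (Q.s b)⁻¹) ∧
    l.foldl (fun z g => g z) a = x

/-! Each symmetry `s b` is a quandle automorphism by right distributivity, so
`s (s b y) = s b * s y * (s b)⁻¹`. Hence the set of `y` with `s y` in the subgroup generated by
the `s a`, `a ∈ A`, contains `A` and is stable under the `s b` and their inverses; when `A`
generates the quandle it is everything, so the finitely many `s a` generate `Inn`. -/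

theorem List.foldl_perm_apply_mem {X : Type*} {S : Set X} (l : List (Equiv.Perm X))
    (hl : ∀ g ∈ l, Set.MapsTo g S S) {a : X} (ha : a ∈ S) :
    l.foldl (fun z g => g z) a ∈ S := by
  induction l generalizing a with
  | nil => exact ha
  | cons g l ih =>
    exact ih (fun h hh => hl h (List.mem_cons_of_mem g hh)) (hl g List.mem_cons_self ha)

namespace QuandleStruct

variable {X : Type*} (Q : QuandleStruct X)

theorem s_apply_eq_conj (b y : X) : Q.s (Q.s b y) = Q.s b * Q.s y * (Q.s b)⁻¹ := by
  ext x
  obtain ⟨z, rfl⟩ := (Q.s b).surjective x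
  simp only [Equiv.Perm.mul_apply, Equiv.Perm.coe_inv, Equiv.symm_apply_apply]
  simp only [Q.s_apply]
  exact (Q.distrib z y b).symm

theorem s_inv_apply_eq_conj (b y : X) : Q.s ((Q.s b)⁻¹ y) = (Q.s b)⁻¹ * Q.s y * Q.s b := by
  have h := Q.s_apply_eq_conj b ((Q.s b)⁻¹ y)
  rw [show Q.s b ((Q.s b)⁻¹ y) = y from (Q.s b).apply_symm_apply y] at h
  rw [h]
  group

theorem mapsTo_preimage_closure_image {A : Set X} {b : X} (hb : b ∈ A) {g : Equiv.Perm X}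
    (hg : g = Q.s b ∨ g = (Q.s b)⁻¹) :
    Set.MapsTo g (Q.s ⁻¹' Subgroup.closure (Q.s '' A)) (Q.s ⁻¹' Subgroup.closure (Q.s '' A)) := by
  intro y hy
  have hsb : Q.s b ∈ Subgroup.closure (Q.s '' A) := Subgroup.subset_closure ⟨b, hb, rfl⟩
  rcases hg with rfl | rfl
  · rw [Set.mem_preimage, Q.s_apply_eq_conj]
    exact mul_mem (mul_mem hsb hy) (inv_mem hsb)
  · rw [Set.mem_preimage, Q.s_inv_apply_eq_conj]
    exact mul_mem (mul_mem (inv_mem hsb) hy) hsb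

theorem s_mem_closure_of_generates {A : Set X} (hA : QGenerates Q A) (x : X) :
    Q.s x ∈ Subgroup.closure (Q.s '' A) := by
  obtain ⟨a, ha, l, hl, rfl⟩ := hA x
  refine List.foldl_perm_apply_mem (S := Q.s ⁻¹' Subgroup.closure (Q.s '' A)) l ?_
    (Subgroup.subset_closure ⟨a, ha, rfl⟩)
  intro g hg
  obtain ⟨b, hb, hgb⟩ := hl g hg
  exact Q.mapsTo_preimage_closure_image hb hgb

theorem inn_eq_closure_image_of_generates {A : Set X} (hA : QGenerates Q A) :
    Q.Inn = Subgroup.closure (Q.s '' A) :=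
  le_antisymm
    ((Subgroup.closure_le _).mpr (Set.range_subset_iff.mpr (Q.s_mem_closure_of_generates hA)))
    (Subgroup.closure_mono (Set.image_subset_range _ _))

end QuandleStruct

/-- A finitely generated quandle has finitely generated inner automorphism group. -/
theorem stmt2 {X : Type*} (Q : QuandleStruct X)
    (hfg : ∃ A : Finset X, QGenerates Q ↑A) : Q.Inn.FG := by
  obtain ⟨A, hA⟩ := hfg
  rw [Subgroup.fg_iff]
  exact ⟨Q.s '' ↑A, (Q.inn_eq_closure_image_of_generates hA).symm, A.finite_toSet.image _⟩
end

section
/- Let X = GAlex(G, σ) and let P be the connected component of the identity element 1 ∈ G. Then the map x ↦ R_x (right translation by x) is a group isomorphism from P onto the displacement group Dis(X). In particular, for every x ∈ P, R_x lies in Dis(X), and every generator s_x s_y^{-1} of Dis(X) equals R_g for g = (1 ▷ x) ▷⁻¹ y ∈ P. -/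
def galexOp {G : Type*} [Group G] (σ : MulAut G) (x y : G) : G :=
  σ (x * y⁻¹) * y

def galexSymm {G : Type*} [Group G] (σ : MulAut G) (y : G) : Equiv.Perm G :=
  (Equiv.mulRight y⁻¹).trans (σ.toEquiv.trans (Equiv.mulRight y))

/-- The inner automorphism group of `GAlex(G, σ)`. -/
def galexInn {G : Type*} [Group G] (σ : MulAut G) : Subgroup (Equiv.Perm G) :=
  Subgroup.closure (Set.range (galexSymm σ))

/-- The displacement group of `GAlex(G, σ)`, generated by the `s_x s_y⁻¹`. -/
def galexDis {G : Type*} [Group G] (σ : MulAut G) : Subgroup (Equiv.Perm G) :=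
  Subgroup.closure {g | ∃ x y : G, g = (galexSymm σ y)⁻¹ * galexSymm σ x}

/-- The connected component of the identity: the `Inn`-orbit of `1`. -/
def galexP {G : Type*} [Group G] (σ : MulAut G) : Set G :=
  {x | ∃ g ∈ galexInn σ, g 1 = x}

namespace GalexAux
variable {G : Type*} [Group G] (σ : MulAut G)

lemma symm_apply (y z : G) : galexSymm σ y z = σ (z * y⁻¹) * y := by
  simp [galexSymm]

lemma symm_symm_apply (y z : G) : (galexSymm σ y).symm z = σ.symm (z * y⁻¹) * y := by
  simp [galexSymm]

def gg (x y : G) : G := x⁻¹ * σ.symm (x * y⁻¹) * y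

lemma key (x y : G) : (galexSymm σ y)⁻¹ * galexSymm σ x
    = (Equiv.mulRight (gg σ x y) : Equiv.Perm G) := by
  ext z
  simp only [Equiv.Perm.mul_apply, Equiv.Perm.inv_def, symm_symm_apply, symm_apply,
    Equiv.coe_mulRight, gg]
  rw [show σ (z*x⁻¹) * x * y⁻¹ = σ (z*x⁻¹) * (x*y⁻¹) by group, map_mul,
    MulEquiv.symm_apply_apply]
  group

variable {G : Type*} [Group G] (σ : MulAut G)

def QQ (σ : MulAut G) : Subgroup G := Subgroup.closure {g | ∃ x y : G, g = gg σ x y}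

lemma gg_mem (x y : G) : gg σ x y ∈ QQ σ := Subgroup.subset_closure ⟨x, y, rfl⟩

lemma map_gg (x y : G) : σ (gg σ x y) = gg σ (σ x) 1 * (gg σ (σ y) 1)⁻¹ := by
  simp only [gg, map_mul, map_inv, MulEquiv.apply_symm_apply, MulEquiv.symm_apply_apply,
    mul_one, inv_one]
  group

lemma symm_gg (x y : G) : σ.symm (gg σ x y) = gg σ (σ.symm x) (σ.symm y) := by
  simp only [gg, map_mul, map_inv]

lemma map_mem_QQ {q : G} (hq : q ∈ QQ σ) : σ q ∈ QQ σ := by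
  induction hq using Subgroup.closure_induction with
  | mem x hx => obtain ⟨a, b, rfl⟩ := hx; rw [map_gg]
                exact mul_mem (gg_mem σ _ _) (inv_mem (gg_mem σ _ _))
  | one => simpa using one_mem (QQ σ)
  | mul a b _ _ ha hb => rw [map_mul]; exact mul_mem ha hb
  | inv a _ ha => rw [map_inv]; exact inv_mem ha

lemma symm_mem_QQ {q : G} (hq : q ∈ QQ σ) : σ.symm q ∈ QQ σ := by
  induction hq using Subgroup.closure_induction with
  | mem x hx => obtain ⟨a, b, rfl⟩ := hx; rw [symm_gg]; exact gg_mem σ _ _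
  | one => simpa using one_mem (QQ σ)
  | mul a b _ _ ha hb => rw [map_mul]; exact mul_mem ha hb
  | inv a _ ha => rw [map_inv]; exact inv_mem ha

lemma gg_one (z : G) : gg σ (σ z) 1 = σ z⁻¹ * z := by
  simp [gg]

lemma gg_one' (z : G) : (gg σ z 1)⁻¹ = σ.symm z⁻¹ * z := by
  simp [gg]

lemma inn_maps_QQ {h : Equiv.Perm G} (hh : h ∈ galexInn σ) :
    ∀ q ∈ QQ σ, h q ∈ QQ σ ∧ h⁻¹ q ∈ QQ σ := by
  induction hh using Subgroup.closure_induction with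
  | mem f hf =>
      obtain ⟨z, rfl⟩ := hf
      intro q hq
      constructor
      · rw [show galexSymm σ z q = σ q * (σ z⁻¹ * z) by
          rw [symm_apply]; simp [map_mul, mul_assoc]]
        exact mul_mem (map_mem_QQ σ hq) (gg_one σ z ▸ gg_mem σ (σ z) 1)
      · rw [show (galexSymm σ z)⁻¹ q = σ.symm q * (σ.symm z⁻¹ * z) by
          rw [Equiv.Perm.inv_def, symm_symm_apply]; simp [map_mul, mul_assoc]]
        exact mul_mem (symm_mem_QQ σ hq) (gg_one' σ z ▸ inv_mem (gg_mem σ z 1))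
  | one => intro q hq; constructor <;> simpa using hq
  | mul a b _ _ ha hb =>
      intro q hq
      refine ⟨?_, ?_⟩
      · rw [Equiv.Perm.mul_apply]; exact (ha _ ((hb q hq).1)).1
      · rw [mul_inv_rev, Equiv.Perm.mul_apply]; exact (hb _ ((ha q hq).2)).2
  | inv a _ ha =>
      intro q hq
      exact ⟨(ha q hq).2, by rw [inv_inv]; exact (ha q hq).1⟩

lemma P_sub_QQ : galexP σ ⊆ (QQ σ : Set G) := by
  rintro x ⟨h, hh, rfl⟩
  exact (inn_maps_QQ σ hh 1 (one_mem _)).1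

lemma mulRight_mul (x y : G) : (Equiv.mulRight (x * y) : Equiv.Perm G)
    = Equiv.mulRight y * Equiv.mulRight x := by
  ext z; simp [mul_assoc]

lemma mulRight_one : (Equiv.mulRight (1 : G) : Equiv.Perm G) = 1 := by
  ext z; simp

lemma mulRight_inv (x : G) : (Equiv.mulRight x⁻¹ : Equiv.Perm G)
    = (Equiv.mulRight x)⁻¹ := by
  ext z; simp [Equiv.Perm.inv_def]

lemma QQ_R_Dis {q : G} (hq : q ∈ QQ σ) :
    (Equiv.mulRight q : Equiv.Perm G) ∈ galexDis σ := by
  induction hq using Subgroup.closure_induction with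
  | mem x hx => obtain ⟨a, b, rfl⟩ := hx
                exact (key σ a b) ▸ Subgroup.subset_closure ⟨a, b, rfl⟩
  | one => rw [mulRight_one]; exact one_mem _
  | mul a b _ _ ha hb => rw [mulRight_mul]; exact mul_mem hb ha
  | inv a _ ha => rw [mulRight_inv]; exact inv_mem ha

lemma Dis_le_Inn : galexDis σ ≤ galexInn σ := by
  rw [galexDis, Subgroup.closure_le]
  rintro f ⟨x, y, rfl⟩
  exact mul_mem (inv_mem (Subgroup.subset_closure ⟨y, rfl⟩))
    (Subgroup.subset_closure ⟨x, rfl⟩)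

lemma gg_mem_P (x y : G) : gg σ x y ∈ galexP σ := by
  refine ⟨(galexSymm σ y)⁻¹ * galexSymm σ x,
    mul_mem (inv_mem (Subgroup.subset_closure ⟨y, rfl⟩))
      (Subgroup.subset_closure ⟨x, rfl⟩), ?_⟩
  rw [key σ x y]; simp

lemma one_mem_P : (1 : G) ∈ galexP σ := ⟨1, one_mem _, rfl⟩

lemma P_R_Dis {x : G} (hx : x ∈ galexP σ) :
    (Equiv.mulRight x : Equiv.Perm G) ∈ galexDis σ :=
  QQ_R_Dis σ (P_sub_QQ σ hx)

lemma P_R_Inn {x : G} (hx : x ∈ galexP σ) :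
    (Equiv.mulRight x : Equiv.Perm G) ∈ galexInn σ :=
  Dis_le_Inn σ (P_R_Dis σ hx)

lemma P_mul {x y : G} (hx : x ∈ galexP σ) (hy : y ∈ galexP σ) :
    x * y ∈ galexP σ := by
  obtain ⟨h, hh, rfl⟩ := hx
  exact ⟨Equiv.mulRight y * h, mul_mem (P_R_Inn σ hy) hh, by simp⟩

lemma P_inv {x : G} (hx : x ∈ galexP σ) : x⁻¹ ∈ galexP σ :=
  ⟨(Equiv.mulRight x)⁻¹, inv_mem (P_R_Inn σ hx), by
    rw [← mulRight_inv]; simp⟩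

lemma Dis_surj {d : Equiv.Perm G} (hd : d ∈ galexDis σ) :
    ∃ x ∈ galexP σ, (Equiv.mulRight x : Equiv.Perm G) = d := by
  induction hd using Subgroup.closure_induction with
  | mem f hf => obtain ⟨a, b, rfl⟩ := hf
                exact ⟨gg σ a b, gg_mem_P σ a b, (key σ a b).symm⟩
  | one => exact ⟨1, one_mem_P σ, mulRight_one⟩
  | mul a b _ _ ha hb =>
      obtain ⟨x, hx, rfl⟩ := ha; obtain ⟨y, hy, rfl⟩ := hb
      exact ⟨y * x, P_mul σ hy hx, mulRight_mul y x⟩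
  | inv a _ ha =>
      obtain ⟨x, hx, rfl⟩ := ha
      exact ⟨x⁻¹, P_inv σ hx, mulRight_inv x⟩

lemma gexp (x y : G) : (galexSymm σ y).symm (galexOp σ 1 x) = gg σ x y := by
  rw [symm_symm_apply, galexOp, gg]
  rw [show σ (1 * x⁻¹) * x * y⁻¹ = σ x⁻¹ * (x * y⁻¹) by group, map_mul,
    MulEquiv.symm_apply_apply]

end GalexAux

/-- For `X = GAlex(G, σ)` with `P` the component of `1`: every `R_x` with
`x ∈ P` lies in `Dis(X)`; every generator `s_x s_y⁻¹` equals `R_g` for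
`g = (1 ▷ x) ▷⁻¹ y ∈ P`; `x ↦ R_x` is a bijection from `P` onto `Dis(X)`; and
it is a group homomorphism (for the composition convention `f g = g ∘ f`). -/
theorem stmt14 {G : Type*} [Group G] (σ : MulAut G) :
    (∀ x ∈ galexP σ, (Equiv.mulRight x : Equiv.Perm G) ∈ galexDis σ) ∧
    (∀ x y : G,
      (galexSymm σ y)⁻¹ * galexSymm σ x =
        (Equiv.mulRight ((galexSymm σ y).symm (galexOp σ 1 x)) : Equiv.Perm G) ∧
      (galexSymm σ y).symm (galexOp σ 1 x) ∈ galexP σ) ∧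
    Set.BijOn (fun x : G => (Equiv.mulRight x : Equiv.Perm G)) (galexP σ)
      (galexDis σ : Set (Equiv.Perm G)) ∧
    (∀ x y : G, (Equiv.mulRight (x * y) : Equiv.Perm G) =
      Equiv.mulRight y * Equiv.mulRight x) := by
  refine ⟨fun x hx => GalexAux.P_R_Dis σ hx, fun x y => ?_,
    ⟨fun x hx => GalexAux.P_R_Dis σ hx, ?_, ?_⟩, fun x y => GalexAux.mulRight_mul x y⟩
  · rw [GalexAux.gexp]
    exact ⟨GalexAux.key σ x y, GalexAux.gg_mem_P σ x y⟩
  · intro a ha b hb h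
    have := congrArg (fun f : Equiv.Perm G => f 1) h
    simpa using this
  · intro d hd
    obtain ⟨x, hx, hr⟩ := GalexAux.Dis_surj σ hd
    exact ⟨x, hx, hr⟩
end

section
/- Let t be a group automorphism of ℤⁿ and X = GAlex(ℤⁿ, t). Then for all x, y, z ∈ ℤⁿ one has z · (s_x s_y^{-1}) = z + (1 − t^{-1})(y − x), and the displacement group Dis(X) is isomorphic to the subgroup (1 − t^{-1})ℤⁿ of ℤⁿ, acting by translations. -/
/-- The point symmetry `s_y : z ↦ t(z − y) + y` of `GAlex(ℤⁿ, t)` (written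
additively). -/
def aSymm {n : ℕ} (t : AddAut (Fin n → ℤ)) (y : Fin n → ℤ) :
    Equiv.Perm (Fin n → ℤ) :=
  (Equiv.addRight (-y)).trans (t.toEquiv.trans (Equiv.addRight y))

/-- The displacement group of `GAlex(ℤⁿ, t)`. -/
def aDis {n : ℕ} (t : AddAut (Fin n → ℤ)) : Subgroup (Equiv.Perm (Fin n → ℤ)) :=
  Subgroup.closure {g | ∃ x y : Fin n → ℤ, g = (aSymm t y)⁻¹ * aSymm t x}

/-!
Since `s_y z = t (z − y) + y` is affine with linear part `t`, the product `s_y⁻¹ s_x` has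
trivial linear part, so it is a translation, by `(1 − t⁻¹)(y − x)`. Translations by the image of an endomorphism form a group, so the
generators of `Dis(X)` already exhaust it.
-/

section Translations

variable (A : Type*) [AddCommGroup A]

def addRightHom : Multiplicative A →* Equiv.Perm A where
  toFun a := Equiv.addRight a.toAdd
  map_one' := Equiv.ext fun z => add_zero z
  map_mul' a b := Equiv.ext fun z => by
    simp only [toAdd_mul, Equiv.coe_addRight, Equiv.Perm.coe_mul, Function.comp_apply]
    abel

variable {A}

theorem closure_range_addRight (f : A →+ A) :
    (Subgroup.closure (Set.range fun v => Equiv.addRight (f v)) : Set (Equiv.Perm A)) =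
      Set.range fun v => Equiv.addRight (f v) := by
  have hrange : (Set.range fun v => Equiv.addRight (f v)) =
      (((addRightHom A).comp f.toMultiplicative).range : Set (Equiv.Perm A)) := by
    rw [MonoidHom.coe_range]; rfl
  rw [hrange, Subgroup.closure_eq]

end Translations

section GAlex

variable {n : ℕ} (t : AddAut (Fin n → ℤ))

theorem aSymm_apply (y z : Fin n → ℤ) : aSymm t y z = t (z - y) + y := by
  simp [aSymm, sub_eq_add_neg]

theorem aSymm_symm_apply (y z : Fin n → ℤ) : (aSymm t y).symm z = (-t) (z - y) + y := by
  rw [Equiv.symm_apply_eq, aSymm_apply, add_sub_cancel_right, AddAut.apply_neg_self,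
    sub_add_cancel]

theorem aSymm_inv_mul_aSymm (x y : Fin n → ℤ) :
    (aSymm t y)⁻¹ * aSymm t x = Equiv.addRight ((y - x) - (-t) (y - x)) := by
  ext1 z
  rw [Equiv.Perm.mul_apply, Equiv.Perm.inv_def, aSymm_symm_apply, aSymm_apply,
    Equiv.coe_addRight, add_sub_assoc, map_add, AddAut.neg_apply_self, ← neg_sub y x, map_neg]
  abel_nf

end GAlex

/-- In `GAlex(ℤⁿ, t)` one has `z · (s_x s_y⁻¹) = z + (1 − t⁻¹)(y − x)`, and the
displacement group is exactly the group of translations by elements of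
`(1 − t⁻¹)ℤⁿ`. -/
theorem stmt17 {n : ℕ} (t : AddAut (Fin n → ℤ)) :
    (∀ x y z : Fin n → ℤ,
      ((aSymm t y)⁻¹ * aSymm t x) z = z + ((y - x) - (-t) (y - x))) ∧
    (aDis t : Set (Equiv.Perm (Fin n → ℤ))) =
      Set.range (fun v : Fin n → ℤ =>
        (Equiv.addRight (v - (-t) v) : Equiv.Perm (Fin n → ℤ))) := by
  refine ⟨fun x y z => by rw [aSymm_inv_mul_aSymm]; rfl, ?_⟩
  let φ : (Fin n → ℤ) →+ (Fin n → ℤ) := AddMonoidHom.id _ - (-t).toAddMonoidHom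
  have hgenerators : {g | ∃ x y : Fin n → ℤ, g = (aSymm t y)⁻¹ * aSymm t x} =
      Set.range fun v => Equiv.addRight (φ v) := by
    ext g
    constructor
    · rintro ⟨x, y, rfl⟩
      exact ⟨y - x, (aSymm_inv_mul_aSymm t x y).symm⟩
    · rintro ⟨v, rfl⟩
      exact ⟨0, v, by rw [aSymm_inv_mul_aSymm, sub_zero]; rfl⟩
  rw [aDis, hgenerators, closure_range_addRight]
  rfl
end
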